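/- arXiv:1111.6818 — 4 statements merged into one kernel-verified Lean document; each statement's English description precedes it below -/
import Mathlib

section
/- Consider n cells on the circle ℝ/ℤ evolving by dx_i/dt = 1 + a(x_i, x̄), where a(x_i, x̄) = 0 unless x_i ∈ R = [r,1) and some x_j ∈ S = [0,s), and a ≥ 0 always (positive feedback), with 0 < v_min ≤ 1 + a ≤ v_max. If at time t_0 the gap from cell x_{i-1} to the next cell x_i in the direction of flow has width w ≥ (1-r)+s, then for all t ≥ t_0 the gap width is nondecreasing: w(t) ≥ w(t_0). -/
/-!
Write `g = x i₁ - x i₀` for the gap, so `g' = a i₁ - a i₀`. If the trailing cell `i₀` feels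
feedback, it lies in `R` and some cell `j` lies in `S`; the copy of `j` that is the first one
ahead of `i₀` is at distance at most `fract (x j) + 1 - fract (x i₀) < s + 1 - r`, so by adjacency
the gap is narrower than `|R| + |S|`. Hence `g' ≥ 0` as long as `g ≥ |R| + |S|`.

That this bound is never crossed needs a little more, since `g` might touch it and then dip below.
Just after any time `T`, no cell can be in `S` within some `η > 0` of its right end `s`: cells move
forward, so a cell only enters `S` through its left end. For `g` to decrease just after `T` the
trailing cell would need a cell of `S` at distance `< |R| + |S|`, i.e. in `[s - η, s)`.
-/

open Filter Topology Set

lemma le_of_eventually_deriv_nonneg {g g' : ℝ → ℝ} {c t₀ : ℝ}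
    (hg : ∀ t, HasDerivAt g (g' t) t) (h₀ : c ≤ g t₀)
    (hloc : ∀ T, t₀ ≤ T → c ≤ g T → ∀ᶠ t in 𝓝[≥] T, 0 ≤ g' t) {t : ℝ} (ht : t₀ ≤ t) :
    c ≤ g t := by
  have hcont : Continuous g := continuous_iff_continuousAt.2 fun t => (hg t).continuousAt
  refine IsClosed.Icc_subset_of_forall_mem_nhdsWithin
    ((isClosed_le continuous_const hcont).inter isClosed_Icc) h₀ (fun T ⟨hT, hTt⟩ => ?_)
    ⟨ht, le_rfl⟩
  obtain ⟨u, hu, hsub⟩ := mem_nhdsGE_iff_exists_Ico_subset.1 (hloc T hTt.1 hT)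
  have hmono : MonotoneOn g (Ico T u) :=
    monotoneOn_of_hasDerivWithinAt_nonneg (convex_Ico T u) hcont.continuousOn
      (fun t _ => (hg t).hasDerivWithinAt) fun t ht => hsub (interior_subset ht)
  filter_upwards [Ioo_mem_nhdsGT hu] with t ht
  exact hT.trans (hmono ⟨le_rfl, hu⟩ (Ioo_subset_Ico_self ht) ht.1.le)

lemma exists_forall_Ico_fract_notMem_Ico {s : ℝ} (hs : 0 < s) (z : ℝ) :
    ∃ η > 0, ∃ ρ > 0, ∀ w ∈ Ico z (z + ρ), Int.fract w ∉ Ico (s - η) s := by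
  have hz := Int.floor_add_fract z
  -- Moving forward from `z`, `fract` increases at unit rate until it wraps around to `0`.
  have hstep : ∀ w, z ≤ w →
      Int.fract w ≤ Int.fract z + (w - z) ∧
        (Int.fract z ≤ Int.fract w ∨ Int.fract w ≤ Int.fract z + (w - z) - 1) := by
    intro w hzw
    have hw := Int.floor_add_fract w
    rcases (Int.floor_mono hzw).eq_or_lt with heq | hlt
    · rw [← heq] at hw
      constructor <;> [linarith; exact .inl (by linarith)]
    · have : (⌊z⌋ : ℝ) + 1 ≤ ⌊w⌋ := by exact_mod_cast hlt
      exact ⟨by linarith, .inr (by linarith)⟩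
  rcases lt_or_ge (Int.fract z) s with hzs | hsz
  · refine ⟨(s - Int.fract z) / 2, by linarith, (s - Int.fract z) / 2, by linarith,
      fun w hw hmem => ?_⟩
    linarith [(hstep w hw.1).1, hw.2, hmem.1]
  · refine ⟨s / 2, by linarith, 1 - Int.fract z + s / 2, by linarith [Int.fract_lt_one z],
      fun w hw hmem => ?_⟩
    rcases (hstep w hw.1).2 with h | h <;> linarith [hw.2, hmem.1, hmem.2]

lemma eventually_eventually_fract_notMem_Ico {s : ℝ} (hs : 0 < s) (z : ℝ) :
    ∀ᶠ η in 𝓝[>] 0, ∀ᶠ w in 𝓝[≥] z, Int.fract w ∉ Ico (s - η) s := by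
  obtain ⟨η₀, hη₀, ρ, hρ, h⟩ := exists_forall_Ico_fract_notMem_Ico hs z
  filter_upwards [Ioo_mem_nhdsGT hη₀] with η hη
  filter_upwards [Ico_mem_nhdsGE (lt_add_of_pos_right z hρ)] with w hw hmem
  exact h w hw ⟨by linarith [hη.2, hmem.1], hmem.2⟩

lemma exists_pos_eventually_forall_fract_notMem_Ico {ι : Type*} [Finite ι] {y : ℝ → ι → ℝ}
    (hmono : ∀ j, Monotone fun t => y t j) (hcont : ∀ j, Continuous fun t => y t j)
    {s : ℝ} (hs : 0 < s) (T : ℝ) :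
    ∃ η > 0, ∀ᶠ t in 𝓝[≥] T, ∀ j, Int.fract (y t j) ∉ Ico (s - η) s := by
  have h : ∀ᶠ η in 𝓝[>] 0, ∀ j, ∀ᶠ t in 𝓝[≥] T, Int.fract (y t j) ∉ Ico (s - η) s := by
    refine eventually_all.2 fun j => ?_
    have hy : Tendsto (fun t => y t j) (𝓝[≥] T) (𝓝[≥] (y T j)) :=
      tendsto_nhdsWithin_of_tendsto_nhds_of_eventually_within _
        ((hcont j).continuousWithinAt.tendsto)
        (eventually_nhdsWithin_of_forall fun t ht => hmono j ht)
    filter_upwards [eventually_eventually_fract_notMem_Ico hs (y T j)] with η hη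
    exact hy.eventually hη
  obtain ⟨η, hη, hη₀⟩ := (h.and self_mem_nhdsWithin).exists
  exact ⟨η, hη₀, eventually_all.2 hη⟩

/-- `u + (fract w + 1 - fract u)` is a translate of `w` lying strictly above `u`. -/
lemma sub_le_fract_add_one_sub_fract {u v w : ℝ} (h : ¬ ∃ m : ℤ, u < w + m ∧ w + m < v) :
    v - u ≤ Int.fract w + 1 - Int.fract u := by
  by_contra! hlt
  have hu := Int.floor_add_fract u
  have hw := Int.floor_add_fract w
  refine h ⟨⌊u⌋ - ⌊w⌋ + 1, ?_, ?_⟩ <;> push_cast <;>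
    linarith [Int.fract_nonneg w, Int.fract_lt_one u]

lemma feedback_eq_zero_of_gap {ι : Type*} {s r η : ℝ} {a : ι → (ι → ℝ) → ℝ}
    (hvanish : ∀ i y,
      ¬ (Int.fract (y i) ∈ Ico r 1 ∧ ∃ j, Int.fract (y j) ∈ Ico 0 s) → a i y = 0)
    {y : ι → ℝ} {i₀ i₁ : ι} (hadj : ∀ j, ¬ ∃ m : ℤ, y i₀ < y j + m ∧ y j + m < y i₁)
    (hS : ∀ j, Int.fract (y j) ∉ Ico (s - η) s) (hgap : (1 - r) + s - η ≤ y i₁ - y i₀) :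
    a i₀ y = 0 :=
  hvanish i₀ y fun ⟨hR, j, hj⟩ =>
    hS j ⟨by linarith [sub_le_fract_add_one_sub_fract (hadj j), hR.1], hj.2⟩

theorem stmt_2_general (n : ℕ) (s r : ℝ) (hs : 0 < s)
    (a : Fin n → (Fin n → ℝ) → ℝ)
    (hpos : ∀ i y, 0 ≤ a i y)
    (hvanish : ∀ i y,
      ¬ (Int.fract (y i) ∈ Set.Ico r 1 ∧ ∃ j, Int.fract (y j) ∈ Set.Ico 0 s) →
      a i y = 0)
    (x : ℝ → Fin n → ℝ)
    (hode : ∀ i t, HasDerivAt (fun τ => x τ i) (1 + a i (x t)) t)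
    (t0 : ℝ) (i₀ i₁ : Fin n)
    -- the gap from i₀ to i₁ contains no cells (adjacency)
    (hadj : ∀ t, t0 ≤ t → ∀ j, ¬ ∃ m : ℤ, x t i₀ < x t j + m ∧ x t j + m < x t i₁)
    -- initial gap width at least |R| + |S|
    (hgap : (1 - r) + s ≤ x t0 i₁ - x t0 i₀) :
    ∀ t1 t2, t0 ≤ t1 → t1 ≤ t2 → x t1 i₁ - x t1 i₀ ≤ x t2 i₁ - x t2 i₀ := by
  set g : ℝ → ℝ := fun t => x t i₁ - x t i₀
  have hg : ∀ t, HasDerivAt g (a i₁ (x t) - a i₀ (x t)) t := fun t => by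
    simpa only [add_sub_add_left_eq_sub] using (hode i₁ t).fun_sub (hode i₀ t)
  have hcells : ∀ j, Monotone fun t => x t j := fun j =>
    monotone_of_hasDerivAt_nonneg (hode j) fun t => add_nonneg zero_le_one (hpos j (x t))
  have hwide : ∀ t, t0 ≤ t → (1 - r) + s ≤ g t := fun t ht => by
    refine le_of_eventually_deriv_nonneg hg hgap (fun T hT hgT => ?_) ht
    obtain ⟨η, hη, hS⟩ := exists_pos_eventually_forall_fract_notMem_Ico hcells
      (fun j => continuous_iff_continuousAt.2 fun t => (hode j t).continuousAt) hs T
    have hnear : ∀ᶠ t in 𝓝[≥] T, (1 - r) + s - η ≤ g t :=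
      eventually_nhdsWithin_of_eventually_nhds
        ((hg T).continuousAt.eventually (le_mem_nhds (by linarith)))
    filter_upwards [hS, hnear, self_mem_nhdsWithin] with t hSt hgt htT
    rw [feedback_eq_zero_of_gap hvanish (hadj t (hT.trans htT)) hSt hgt, sub_zero]
    exact hpos i₁ (x t)
  have hmono : MonotoneOn g (Ici t0) := by
    refine monotoneOn_of_hasDerivWithinAt_nonneg (convex_Ici t0)
      (fun t _ => (hg t).continuousAt.continuousWithinAt) (fun t _ => (hg t).hasDerivWithinAt)
      fun t ht => ?_
    rw [interior_Ici] at ht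
    rw [feedback_eq_zero_of_gap (η := 0) hvanish (hadj t ht.le) (by simp)
      (by simpa using hwide t ht.le), sub_zero]
    exact hpos i₁ (x t)
  intro t1 t2 h1 h12
  exact hmono h1 (h1.trans h12) h12

/-- In an RS-feedback system with positive feedback (a ≥ 0, vanishing
unless the cell is in R = [r,1) and some cell is in S = [0,s), speeds in
[v_min, v_max]), if the gap between adjacent cells x_{i₀} (behind) and x_{i₁}
(ahead) has width ≥ (1-r)+s at time t₀, then for all later times the gap width is
nondecreasing.  Cells are represented by real-valued lifts; circle position is the
fractional part. -/
theorem stmt_2 (n : ℕ) (s r vmin vmax : ℝ) (hs : 0 < s) (hsr : s < r) (hr : r < 1)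
    (a : Fin n → (Fin n → ℝ) → ℝ)
    (hpos : ∀ i y, 0 ≤ a i y)
    (hvanish : ∀ i y,
      ¬ (Int.fract (y i) ∈ Set.Ico r 1 ∧ ∃ j, Int.fract (y j) ∈ Set.Ico 0 s) →
      a i y = 0)
    (hvmin : 0 < vmin)
    (hbd : ∀ i y, vmin ≤ 1 + a i y ∧ 1 + a i y ≤ vmax)
    (x : ℝ → Fin n → ℝ)
    (hode : ∀ i t, HasDerivAt (fun τ => x τ i) (1 + a i (x t)) t)
    (t0 : ℝ) (i₀ i₁ : Fin n)
    -- the lift of cell i₁ stays ahead of that of cell i₀, within one full turn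
    (horder : ∀ t, t0 ≤ t → x t i₀ ≤ x t i₁ ∧ x t i₁ ≤ x t i₀ + 1)
    -- the gap from i₀ to i₁ contains no cells (adjacency)
    (hadj : ∀ t, t0 ≤ t → ∀ j, ¬ ∃ m : ℤ, x t i₀ < x t j + m ∧ x t j + m < x t i₁)
    -- initial gap width at least |R| + |S|
    (hgap : (1 - r) + s ≤ x t0 i₁ - x t0 i₀) :
    ∀ t1 t2, t0 ≤ t1 → t1 ≤ t2 → x t1 i₁ - x t1 i₀ ≤ x t2 i₁ - x t2 i₀ :=
  stmt_2_general n s r hs a hpos hvanish x hode t0 i₀ i₁ hadj hgap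
end

section
/- For the k = 2 cluster return map F on [0,1] with parameters 0 < s < r < 1, feedback value α = f(1/2) > -1, and r + (1+α)s < 1, F is given piecewise by F(x) = 1 - x on [0, r-s], F(x) = 1 - (1+α)x + α(r-s) on (r-s, r), F(x) = 1 - x - αs on [r, 1-(1+α)s), and F(x) = (1-x)/(1+α) on (1-(1+α)s, 1]. This F is continuous and strictly decreasing on [0,1], with F(0)=1 and F(1)=0. -/
/-!
Each of the four affine pieces of `F` is continuous and strictly decreasing on all of `ℝ`
(the last one because `1 + α > 0`), and consecutive pieces agree at the breakpoints
`r - s < r < 1 - (1 + α) s`, which are ordered because `r + (1 + α) s < 1`. Gluing two continuous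
strictly antitone functions that agree at the cut point gives again one.
-/

open Set

section Glue

variable {α β : Type*} [LinearOrder α] {f g : α → β} {a : α}

theorem ite_lt_eq_ite_le (h : f a = g a) :
    (fun x => if x < a then f x else g x) = fun x => if x ≤ a then f x else g x := by
  funext x
  rcases lt_trichotomy x a with hx | rfl | hx
  · simp [hx, hx.le]
  · simp [h]
  · simp [hx.not_gt, hx.not_ge]

theorem StrictAnti.ite_le [Preorder β] (hf : StrictAnti f) (hg : StrictAnti g) (h : f a = g a) :
    StrictAnti fun x => if x ≤ a then f x else g x := by
  refine StrictAntiOn.Iic_union_Ici (a := a)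
    ((hf.strictAntiOn _).congr fun x hx => (if_pos hx).symm)
    ((hg.strictAntiOn _).congr fun x hx => ?_)
  rcases (mem_Ici.mp hx).eq_or_lt with rfl | hx
  · simp [h]
  · simp [hx.not_ge]

theorem StrictAnti.ite_lt [Preorder β] (hf : StrictAnti f) (hg : StrictAnti g) (h : f a = g a) :
    StrictAnti fun x => if x < a then f x else g x :=
  ite_lt_eq_ite_le h ▸ hf.ite_le hg h

variable [TopologicalSpace α] [OrderClosedTopology α] [TopologicalSpace β]

theorem Continuous.ite_le (hf : Continuous f) (hg : Continuous g) (h : f a = g a) :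
    Continuous fun x => if x ≤ a then f x else g x :=
  hf.if_le hg continuous_id continuous_const fun _ hx => hx ▸ h

theorem Continuous.ite_lt (hf : Continuous f) (hg : Continuous g) (h : f a = g a) :
    Continuous fun x => if x < a then f x else g x :=
  ite_lt_eq_ite_le h ▸ hf.ite_le hg h

end Glue

noncomputable def returnMap (s r α x : ℝ) : ℝ :=
  if x ≤ r - s then 1 - x
  else if x < r then 1 - (1 + α) * x + α * (r - s)
  else if x < 1 - (1 + α) * s then 1 - x - α * s
  else (1 - x) / (1 + α)

section ReturnMap

variable {s r α : ℝ}

theorem returnMap_of_pieces {P : (ℝ → ℝ) → Prop}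
    (ite_le : ∀ {f g : ℝ → ℝ} {a : ℝ}, P f → P g → f a = g a →
      P fun x => if x ≤ a then f x else g x)
    (ite_lt : ∀ {f g : ℝ → ℝ} {a : ℝ}, P f → P g → f a = g a →
      P fun x => if x < a then f x else g x)
    (h₁ : P fun x => 1 - x) (h₂ : P fun x => 1 - (1 + α) * x + α * (r - s))
    (h₃ : P fun x => 1 - x - α * s) (h₄ : P fun x => (1 - x) / (1 + α))
    (hs : 0 < s) (hα : 1 + α ≠ 0) (hcase : r + (1 + α) * s < 1) :
    P (returnMap s r α) := by
  have hrc : r < 1 - (1 + α) * s := by linarith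
  have hsr : r - s < r := by linarith
  set G₃ : ℝ → ℝ := fun x => if x < 1 - (1 + α) * s then 1 - x - α * s else (1 - x) / (1 + α)
  set G₂ : ℝ → ℝ := fun x => if x < r then 1 - (1 + α) * x + α * (r - s) else G₃ x
  have at_c : 1 - (1 - (1 + α) * s) - α * s = (1 - (1 - (1 + α) * s)) / (1 + α) := by
    field_simp; ring
  have at_r : 1 - (1 + α) * r + α * (r - s) = G₃ r := by simp only [G₃, if_pos hrc]; ring
  have at_rs : 1 - (r - s) = G₂ (r - s) := by simp only [G₂, if_pos hsr]; ring
  exact ite_le h₁ (ite_lt h₂ (ite_lt h₃ h₄ at_c) at_r) at_rs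

theorem continuous_returnMap (hs : 0 < s) (hα : 1 + α ≠ 0) (hcase : r + (1 + α) * s < 1) :
    Continuous (returnMap s r α) :=
  returnMap_of_pieces Continuous.ite_le Continuous.ite_lt (by fun_prop) (by fun_prop)
    (by fun_prop) (by fun_prop) hs hα hcase

theorem strictAnti_returnMap (hs : 0 < s) (hα : 0 < 1 + α) (hcase : r + (1 + α) * s < 1) :
    StrictAnti (returnMap s r α) :=
  returnMap_of_pieces StrictAnti.ite_le StrictAnti.ite_lt (fun x y hxy => by linarith)
    (fun x y hxy => by linarith [mul_lt_mul_of_pos_left hxy hα]) (fun x y hxy => by linarith)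
    (fun x y hxy => div_lt_div_of_pos_right (by linarith) hα) hs hα.ne' hcase

end ReturnMap

theorem stmt_5_general (s r α : ℝ) (hs : 0 < s) (hsr : s < r)
    (hα : -1 < α) (hcase : r + (1 + α) * s < 1)
    (F : ℝ → ℝ)
    (hF : ∀ x,
      F x = if x ≤ r - s then 1 - x
            else if x < r then 1 - (1 + α) * x + α * (r - s)
            else if x < 1 - (1 + α) * s then 1 - x - α * s
            else (1 - x) / (1 + α)) :
    ContinuousOn F (Set.Icc 0 1) ∧ StrictAntiOn F (Set.Icc 0 1) ∧
      F 0 = 1 ∧ F 1 = 0 := by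
  have hα' : 0 < 1 + α := by linarith
  have hF' : F = returnMap s r α := funext hF
  refine ⟨?_, ?_, ?_, ?_⟩
  · exact hF' ▸ (continuous_returnMap hs hα'.ne' hcase).continuousOn
  · exact hF' ▸ (strictAnti_returnMap hs hα' hcase).strictAntiOn _
  · rw [hF, if_pos (by linarith)]
    ring
  · have : 0 < (1 + α) * s := mul_pos hα' hs
    rw [hF, if_neg (by linarith), if_neg (by linarith), if_neg (by linarith)]
    simp

/-- For 0 < s < r < 1, α = f(1/2) > -1 and r + (1+α)s < 1, the
two-cluster return map F given by the four-piece formula is continuous and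
strictly decreasing on [0,1], with F(0) = 1 and F(1) = 0. -/
theorem stmt_5 (s r α : ℝ) (hs : 0 < s) (hsr : s < r) (hr : r < 1)
    (hα : -1 < α) (hcase : r + (1 + α) * s < 1)
    (F : ℝ → ℝ)
    (hF : ∀ x,
      F x = if x ≤ r - s then 1 - x
            else if x < r then 1 - (1 + α) * x + α * (r - s)
            else if x < 1 - (1 + α) * s then 1 - x - α * s
            else (1 - x) / (1 + α)) :
    ContinuousOn F (Set.Icc 0 1) ∧ StrictAntiOn F (Set.Icc 0 1) ∧
      F 0 = 1 ∧ F 1 = 0 :=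
  stmt_5_general s r α hs hsr hα hcase F hF
end

section
/- Let n ≥ 1 and β > 0. Every complex root λ of the polynomial p(λ) = λ^n + (1+β)(λ^{n-1} + λ^{n-2} + ... + λ + 1) satisfies |λ| > 1. -/
namespace Complex

theorem re_lt_one_of_norm_le_one {z : ℂ} (hz : ‖z‖ ≤ 1) (hz1 : z ≠ 1) : z.re < 1 := by
  rcases eq_or_ne z.im 0 with him | him
  · have hre : z = z.re := ext rfl him
    have hre_le : z.re ≤ 1 := (re_le_norm z).trans hz
    refine hre_le.lt_of_ne fun h => hz1 ?_
    rw [hre, h, ofReal_one]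
  · exact (le_abs_self _).trans_lt ((abs_re_lt_norm.2 him).trans_le hz)

theorem norm_add_ofReal_lt_one_add {z : ℂ} {β : ℝ} (hβ : 0 < β) (hz : ‖z‖ ≤ 1) (hz1 : z ≠ 1) :
    ‖z + β‖ < 1 + β := by
  have hre := re_lt_one_of_norm_le_one hz hz1
  have hnormSq : normSq (z + β) = normSq z + 2 * β * z.re + β ^ 2 := by
    simp only [normSq_apply, add_re, add_im, ofReal_re, ofReal_im, add_zero]
    ring
  have hsq : ‖z + β‖ ^ 2 < (1 + β) ^ 2 := by
    rw [← normSq_eq_norm_sq, hnormSq, normSq_eq_norm_sq]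
    nlinarith [norm_nonneg z]
  exact lt_of_pow_lt_pow_left₀ 2 (by positivity) hsq

end Complex

theorem stmt_9_general (n : ℕ) (β : ℝ) (hβ : 0 < β) (lam : ℂ)
    (hroot : lam ^ n + (1 + (β : ℂ)) * ∑ i ∈ Finset.range n, lam ^ i = 0) :
    1 < ‖lam‖ := by
  by_contra! hle
  have hne : lam ≠ 1 := by
    rintro rfl
    have hpos : (0 : ℝ) < 1 + (1 + β) * n := by positivity
    have : ((1 + (1 + β) * n : ℝ) : ℂ) = 0 := by
      push_cast
      simpa using hroot
    exact hpos.ne' (by exact_mod_cast this)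
  -- multiplying `p` by `lam - 1` telescopes the geometric sum
  have hfactor : lam ^ n * (lam + β) = 1 + β := by
    linear_combination (lam - 1) * hroot - (1 + (β : ℂ)) * geom_sum_mul lam n
  have hlt : 1 + β < 1 + β :=
    calc 1 + β = ‖lam ^ n * (lam + β)‖ := by
          rw [hfactor, ← Complex.ofReal_one, ← Complex.ofReal_add, Complex.norm_real,
            Real.norm_of_nonneg (by positivity)]
      _ = ‖lam‖ ^ n * ‖lam + β‖ := by rw [norm_mul, norm_pow]
      _ ≤ ‖lam + β‖ := mul_le_of_le_one_left (norm_nonneg _) (pow_le_one₀ (norm_nonneg _) hle)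
      _ < 1 + β := Complex.norm_add_ofReal_lt_one_add hβ hle hne
  exact lt_irrefl _ hlt

/-- For n ≥ 1 and β > 0, every complex root of
p(λ) = λ^n + (1+β)(λ^{n-1} + ... + λ + 1) satisfies |λ| > 1. -/
theorem stmt_9 (n : ℕ) (hn : 1 ≤ n) (β : ℝ) (hβ : 0 < β) (lam : ℂ)
    (hroot : lam ^ n + (1 + (β : ℂ)) * ∑ i ∈ Finset.range n, lam ^ i = 0) :
    1 < ‖lam‖ :=
  stmt_9_general n β hβ lam hroot
end

section
/- Let n ≥ 1 and -1 < β < 0. Every complex root λ of p(λ) = λ^n + (1+β)(λ^{n-1} + ... + λ + 1) satisfies |λ| < 1. -/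
/-!
Multiplying by `λ - 1` turns the root condition into `λ ^ n (λ + β) = 1 + β`, and `λ = 1` is never a
root. If `|λ| ≥ 1` and `λ ≠ 1`, then `|λ + β| > 1 + β` because `β < 0`: for `|λ| > 1` by the reverse
triangle inequality, and for `|λ| = 1` because `Re λ < 1`. Then `|λ| ^ n |λ + β| > 1 + β`, a
contradiction.
-/

open Finset

theorem sub_one_mul_pow_add_mul_geom_sum {R : Type*} [CommRing R] (x c : R) (n : ℕ) :
    (x - 1) * (x ^ n + c * ∑ i ∈ range n, x ^ i) = x ^ n * (x + c - 1) - c := by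
  linear_combination c * geom_sum_mul x n

namespace Complex

theorem re_lt_one_of_norm_eq_one {z : ℂ} (hz : ‖z‖ = 1) (hz1 : z ≠ 1) : z.re < 1 := by
  refine (hz ▸ re_le_norm z).lt_of_ne fun hre ↦ hz1 (ext hre ?_)
  have := sq_norm_sub_sq_re z
  rw [hz, hre] at this
  simpa using this.symm

theorem one_add_lt_norm_add_ofReal {z : ℂ} {β : ℝ} (hz : 1 ≤ ‖z‖) (hz1 : z ≠ 1) (hβ : β < 0) :
    1 + β < ‖z + β‖ := by
  rcases hz.eq_or_lt with hz | hz
  · have hre := re_lt_one_of_norm_eq_one hz.symm hz1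
    -- `‖z + β‖² = 1 + 2β Re z + β²` and `β Re z > β`
    have hsq : (1 + β) ^ 2 < ‖z + β‖ ^ 2 := by
      have h1 : z.re * z.re + z.im * z.im = 1 := by
        rw [← normSq_apply, ← Complex.sq_norm, ← hz, one_pow]
      rw [Complex.sq_norm, normSq_apply]
      simp only [add_re, ofReal_re, add_im, ofReal_im, add_zero]
      nlinarith
    exact lt_of_pow_lt_pow_left₀ 2 (norm_nonneg _) hsq
  · calc 1 + β < ‖z‖ - ‖(β : ℂ)‖ := by rw [norm_real, Real.norm_of_nonpos hβ.le]; linarith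
      _ ≤ ‖z + β‖ := by simpa using norm_sub_norm_le z (-β)

end Complex

theorem stmt_10_general (n : ℕ) (β : ℝ) (hβ₁ : -1 < β) (hβ₂ : β < 0) (lam : ℂ)
    (hroot : lam ^ n + (1 + (β : ℂ)) * ∑ i ∈ Finset.range n, lam ^ i = 0) :
    ‖lam‖ < 1 := by
  have hβ : 0 < 1 + β := by linarith
  have hne1 : lam ≠ 1 := by
    rintro rfl
    have : 1 + (1 + β) * n = (0 : ℝ) := by simpa using congrArg Complex.re hroot
    nlinarith [n.cast_nonneg (α := ℝ)]
  have key : lam ^ n * (lam + β) = 1 + β := by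
    linear_combination -sub_one_mul_pow_add_mul_geom_sum lam (1 + (β : ℂ)) n + (lam - 1) * hroot
  have hnorm : ‖lam‖ ^ n * ‖lam + β‖ = 1 + β := by
    have h := congrArg norm key
    rwa [norm_mul, norm_pow, ← Complex.ofReal_one, ← Complex.ofReal_add, Complex.norm_real,
      Real.norm_of_nonneg hβ.le] at h
  by_contra! hlam
  have := Complex.one_add_lt_norm_add_ofReal hlam hne1 hβ₂
  nlinarith [one_le_pow₀ (n := n) hlam, norm_nonneg (lam + β)]

/-- For n ≥ 1 and -1 < β < 0, every complex root of
p(λ) = λ^n + (1+β)(λ^{n-1} + ... + λ + 1) satisfies |λ| < 1. -/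
theorem stmt_10 (n : ℕ) (hn : 1 ≤ n) (β : ℝ) (hβ₁ : -1 < β) (hβ₂ : β < 0) (lam : ℂ)
    (hroot : lam ^ n + (1 + (β : ℂ)) * ∑ i ∈ Finset.range n, lam ^ i = 0) :
    ‖lam‖ < 1 :=
  stmt_10_general n β hβ₁ hβ₂ lam hroot
end
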